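/- Let k be a field of characteristic zero, let Ω be the 3-dimensional k-vector space with basis {≺, ≻, •}, let ⋆ = ≺ + ≻ + •, and let Λ_N ⊆ (Ω⊗Ω) ⊕ (Ω⊗Ω) be the NS-algebra relation space, namely the span of (≺⊗≺, ≺⊗⋆), (≻⊗≺, ≻⊗≺), (⋆⊗≻, ≻⊗≻), and (⋆⊗• + •⊗≺, ≻⊗• + •⊗⋆). Then the linear maps α, β : Ω → k determined by α(≺) = 1, α(≻) = α(•) = 0, β(≻) = 1, β(≺) = β(•) = 0 form a unit action for ⋆ that is coherent with Λ_N. -/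

import Mathlib

open TensorProduct

section Defs

variable {k : Type*} [Field k]

noncomputable def contrL {Ω : Type*} [AddCommGroup Ω] [Module k Ω]
    (φ : Module.Dual k Ω) : Ω ⊗[k] Ω →ₗ[k] Ω :=
  (TensorProduct.lid k Ω).toLinearMap ∘ₗ TensorProduct.map φ LinearMap.id

noncomputable def contrR {Ω : Type*} [AddCommGroup Ω] [Module k Ω]
    (φ : Module.Dual k Ω) : Ω ⊗[k] Ω →ₗ[k] Ω :=
  (TensorProduct.rid k Ω).toLinearMap ∘ₗ TensorProduct.map LinearMap.id φ

noncomputable def contrB {Ω₁ Ω₂ : Type*} [AddCommGroup Ω₁] [Module k Ω₁]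
    [AddCommGroup Ω₂] [Module k Ω₂]
    (φ : Module.Dual k Ω₁) (ψ : Module.Dual k Ω₂) : Ω₁ ⊗[k] Ω₂ →ₗ[k] k :=
  (TensorProduct.lid k k).toLinearMap ∘ₗ TensorProduct.map φ ψ

/-- The coherence equations (C1)-(C5) for a pair `uv ∈ (Ω⊗Ω) × (Ω⊗Ω)`. -/
def CoherenceEqs {Ω : Type*} [AddCommGroup Ω] [Module k Ω]
    (α β : Module.Dual k Ω) (star : Ω)
    (uv : (Ω ⊗[k] Ω) × (Ω ⊗[k] Ω)) : Prop :=
  contrL β uv.1 = contrL β uv.2 ∧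
  contrL α uv.1 = contrR β uv.2 ∧
  contrR α uv.1 = contrR α uv.2 ∧
  contrR β uv.1 = contrB β β uv.2 • star ∧
  contrB α α uv.1 • star = contrL α uv.2

/-- The compatibility equations (C1)-(C3). -/
def CompatEqs {Ω : Type*} [AddCommGroup Ω] [Module k Ω]
    (α β : Module.Dual k Ω)
    (uv : (Ω ⊗[k] Ω) × (Ω ⊗[k] Ω)) : Prop :=
  contrL β uv.1 = contrL β uv.2 ∧
  contrL α uv.1 = contrR β uv.2 ∧
  contrR α uv.1 = contrR α uv.2

def IsCoherent {Ω : Type*} [AddCommGroup Ω] [Module k Ω]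
    (α β : Module.Dual k Ω) (star : Ω)
    (Λ : Submodule k ((Ω ⊗[k] Ω) × (Ω ⊗[k] Ω))) : Prop :=
  ∀ uv ∈ Λ, CoherenceEqs α β star uv

def IsCompatible {Ω : Type*} [AddCommGroup Ω] [Module k Ω]
    (α β : Module.Dual k Ω)
    (Λ : Submodule k ((Ω ⊗[k] Ω) × (Ω ⊗[k] Ω))) : Prop :=
  ∀ uv ∈ Λ, CompatEqs α β uv


@[simp] lemma contrL_tmul {Ω : Type*} [AddCommGroup Ω] [Module k Ω]
    (φ : Module.Dual k Ω) (a b : Ω) : contrL φ (a ⊗ₜ[k] b) = φ a • b := by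
  simp [contrL]

@[simp] lemma contrR_tmul {Ω : Type*} [AddCommGroup Ω] [Module k Ω]
    (φ : Module.Dual k Ω) (a b : Ω) : contrR φ (a ⊗ₜ[k] b) = φ b • a := by
  simp [contrR]

@[simp] lemma contrB_tmul {Ω : Type*} [AddCommGroup Ω] [Module k Ω]
    (φ ψ : Module.Dual k Ω) (a b : Ω) : contrB φ ψ (a ⊗ₜ[k] b) = φ a * ψ b := by
  simp [contrB, smul_eq_mul]

lemma coh_span {Ω : Type*} [AddCommGroup Ω] [Module k Ω]
    (α β : Module.Dual k Ω) (star : Ω) (s : Set ((Ω ⊗[k] Ω) × (Ω ⊗[k] Ω)))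
    (h : ∀ uv ∈ s, CoherenceEqs α β star uv) :
    ∀ uv ∈ Submodule.span k s, CoherenceEqs α β star uv := by
  intro uv huv
  induction huv using Submodule.span_induction with
  | mem x hx => exact h x hx
  | zero => simp [CoherenceEqs]
  | add x y _ _ hx hy =>
      obtain ⟨a1,a2,a3,a4,a5⟩ := hx; obtain ⟨b1,b2,b3,b4,b5⟩ := hy
      refine ⟨?_,?_,?_,?_,?_⟩ <;>
        simp only [Prod.fst_add, Prod.snd_add, map_add, add_smul] <;>
        first
          | rw [a1,b1] | rw [a2,b2] | rw [a3,b3] | rw [a4,b4]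
          | rw [← a5, ← b5]
  | smul c x _ hx =>
      obtain ⟨a1,a2,a3,a4,a5⟩ := hx
      refine ⟨?_,?_,?_,?_,?_⟩ <;>
        simp only [Prod.smul_fst, Prod.smul_snd, map_smul, smul_assoc] <;>
        first
          | rw [a1] | rw [a2] | rw [a3] | rw [a4] | rw [← a5]

end Defs

/-- The standard unit action on the NS-algebra is coherent. -/
theorem NS_algebra_coherent
    {k : Type*} [Field k] [CharZero k]
    {Ω : Type*} [AddCommGroup Ω] [Module k Ω]
    (b : Module.Basis (Fin 3) k Ω)
    (star : Ω) (hstar : star = b 0 + b 1 + b 2)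
    (ΛN : Submodule k ((Ω ⊗[k] Ω) × (Ω ⊗[k] Ω)))
    (hΛ : ΛN = Submodule.span k
      ({(b 0 ⊗ₜ[k] b 0, b 0 ⊗ₜ[k] star),
        (b 1 ⊗ₜ[k] b 0, b 1 ⊗ₜ[k] b 0),
        (star ⊗ₜ[k] b 1, b 1 ⊗ₜ[k] b 1),
        (star ⊗ₜ[k] b 2 + b 2 ⊗ₜ[k] b 0, b 1 ⊗ₜ[k] b 2 + b 2 ⊗ₜ[k] star)} :
        Set ((Ω ⊗[k] Ω) × (Ω ⊗[k] Ω))))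
    (α β : Module.Dual k Ω)
    (hα0 : α (b 0) = 1) (hα1 : α (b 1) = 0) (hα2 : α (b 2) = 0)
    (hβ0 : β (b 0) = 0) (hβ1 : β (b 1) = 1) (hβ2 : β (b 2) = 0) :
    α star = 1 ∧ β star = 1 ∧ IsCoherent α β star ΛN := by
  subst hstar hΛ
  refine ⟨by simp [hα0, hα1, hα2], by simp [hβ0, hβ1, hβ2], ?_⟩
  apply coh_span
  intro uv huv
  simp only [Set.mem_insert_iff, Set.mem_singleton_iff] at huv
  rcases huv with h | h | h | h <;> subst h <;>
    refine ⟨?_, ?_, ?_, ?_, ?_⟩ <;>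
    simp [CoherenceEqs, tmul_add, add_tmul, map_add, hα0, hα1, hα2, hβ0, hβ1, hβ2,
      smul_add, add_smul]
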